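/- The number s_n of separable permutations of [n] satisfies the recurrence s_n = s_1 s_{n−1} + (1/2)∑_{j=2}^{n−1} s_j s_{n−j} + (1/2) s_n for all n ≥ 2, with s_1 = 1. -/

import Mathlib

open Equiv Finset Filter Topology

/-- Direct sum of permutations: `(σ⊕τ)(i)=σ(i)` for `i<k`, `(σ⊕τ)(k+i)=k+τ(i)`. -/
def directSum {k l : ℕ} (σ : Equiv.Perm (Fin k)) (τ : Equiv.Perm (Fin l)) :
    Equiv.Perm (Fin (k + l)) :=
  finSumFinEquiv.symm.trans ((Equiv.sumCongr σ τ).trans finSumFinEquiv)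

/-- Skew sum of permutations: `(σ⊖τ)(i)=σ(i)+l` for `i<k`, `(σ⊖τ)(k+i)=τ(i)`. -/
def skewSum {k l : ℕ} (σ : Equiv.Perm (Fin k)) (τ : Equiv.Perm (Fin l)) :
    Equiv.Perm (Fin (k + l)) :=
  finSumFinEquiv.symm.trans ((Equiv.sumCongr σ τ).trans
    ((Equiv.sumComm (Fin k) (Fin l)).trans (finSumFinEquiv.trans (finCongr (Nat.add_comm l k)))))

/-- A permutation is separable if it is the singleton or a direct or skew sum of
two separable permutations. -/
inductive Separable : {n : ℕ} → Equiv.Perm (Fin n) → Prop where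
  | single : Separable (Equiv.refl (Fin 1))
  | dsum {k l : ℕ} {σ : Equiv.Perm (Fin k)} {τ : Equiv.Perm (Fin l)} :
      Separable σ → Separable τ → Separable (directSum σ τ)
  | ssum {k l : ℕ} {σ : Equiv.Perm (Fin k)} {τ : Equiv.Perm (Fin l)} :
      Separable σ → Separable τ → Separable (skewSum σ τ)

/-- `numSep n` = number of separable permutations of `[n]` (denoted `s_n`). -/
noncomputable def numSep (n : ℕ) : ℕ := Nat.card {σ : Equiv.Perm (Fin n) // Separable σ}

/-!
For `n ≥ 2` a separable permutation is a direct sum or a skew sum of two smaller separable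
ones, never both, and the complement `i ↦ n - 1 - σ i` exchanges the two kinds. Hence exactly
half of the `s_n` separable permutations are sum-decomposable, and the sum-indecomposable ones
of size `j` number `s_j / 2` for `j ≥ 2` (and `1` for `j = 1`). Cutting a sum-decomposable
permutation at its first split point writes it uniquely as `α ⊕ β` with `α` sum-indecomposable,
so `s_n / 2 = s_1 s_{n-1} + ∑_{j=2}^{n-1} (s_j / 2) s_{n-j}`.
-/

section SumValues

variable {k l : ℕ} (σ : Perm (Fin k)) (τ : Perm (Fin l))

@[simp] lemma directSum_castAdd (i : Fin k) :
    directSum σ τ (Fin.castAdd l i) = Fin.castAdd l (σ i) := by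
  simp [directSum]

@[simp] lemma directSum_natAdd (i : Fin l) :
    directSum σ τ (Fin.natAdd k i) = Fin.natAdd k (τ i) := by
  simp [directSum]

@[simp] lemma skewSum_castAdd_val (i : Fin k) :
    (skewSum σ τ (Fin.castAdd l i) : ℕ) = σ i + l := by
  simp [skewSum]

@[simp] lemma skewSum_natAdd_val (i : Fin l) :
    (skewSum σ τ (Fin.natAdd k i) : ℕ) = τ i := by
  simp [skewSum]

end SumValues

lemma directSum_assoc {k l m : ℕ} (σ : Perm (Fin k)) (τ : Perm (Fin l)) (ρ : Perm (Fin m)) :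
    (finCongr (Nat.add_assoc k l m)).permCongr (directSum (directSum σ τ) ρ) =
      directSum σ (directSum τ ρ) := by
  ext i
  refine Fin.addCases (fun i => ?_) (fun i => Fin.addCases (fun i => ?_) (fun i => ?_) i) i
  · simp [Equiv.permCongr_apply, ← Fin.castAdd_castAdd]
  · simp [Equiv.permCongr_apply, ← Fin.castAdd_natAdd]
  · have : Fin.cast (Nat.add_assoc k l m).symm (Fin.natAdd k (Fin.natAdd l i)) =
        Fin.natAdd (k + l) i := Fin.ext (by simp [Nat.add_assoc])
    simp [Equiv.permCongr_apply, this, Nat.add_assoc]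

def permCompl {n : ℕ} (σ : Perm (Fin n)) : Perm (Fin n) := σ.trans Fin.revPerm

@[simp] lemma permCompl_apply_val {n : ℕ} (σ : Perm (Fin n)) (i : Fin n) :
    (permCompl σ i : ℕ) = n - 1 - σ i := by
  simp [permCompl]; omega

@[simp] lemma permCompl_permCompl {n : ℕ} (σ : Perm (Fin n)) :
    permCompl (permCompl σ) = σ := by
  ext i; simp [permCompl]

lemma permCompl_directSum {k l : ℕ} (σ : Perm (Fin k)) (τ : Perm (Fin l)) :
    permCompl (directSum σ τ) = skewSum (permCompl σ) (permCompl τ) := by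
  ext i
  refine Fin.addCases (fun i => ?_) (fun i => ?_) i
  · have := (σ i).2; simp; omega
  · have := (τ i).2; simp; omega

lemma permCompl_skewSum {k l : ℕ} (σ : Perm (Fin k)) (τ : Perm (Fin l)) :
    permCompl (skewSum σ τ) = directSum (permCompl σ) (permCompl τ) := by
  simpa using (congrArg permCompl (permCompl_directSum (permCompl σ) (permCompl τ))).symm

lemma Separable.compl {n : ℕ} {σ : Perm (Fin n)} (h : Separable σ) :
    Separable (permCompl σ) := by
  induction h with
  | single => exact (Subsingleton.elim (Equiv.refl (Fin 1)) (permCompl _)) ▸ .single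
  | dsum _ _ ih₁ ih₂ => rw [permCompl_directSum]; exact ih₁.ssum ih₂
  | ssum _ _ ih₁ ih₂ => rw [permCompl_skewSum]; exact ih₁.dsum ih₂

lemma Separable.pos {n : ℕ} {σ : Perm (Fin n)} (h : Separable σ) : 0 < n := by
  induction h <;> omega

lemma Separable.permCongr {n n' : ℕ} (h : n = n') {σ : Perm (Fin n)} (hσ : Separable σ) :
    Separable ((finCongr h).permCongr σ) := by
  subst h; convert hσ; ext; simp

/-- `σ = α ⊕ β` with `α` of size `m`, phrased on `Fin n` to avoid casts. -/
def SplitsAt {n : ℕ} (σ : Perm (Fin n)) (m : ℕ) : Prop :=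
  ∀ i : Fin n, (i : ℕ) < m → (σ i : ℕ) < m

def IsSumDecomposable {n : ℕ} (σ : Perm (Fin n)) : Prop :=
  ∃ m, 0 < m ∧ m < n ∧ SplitsAt σ m

lemma SplitsAt.symm {n m : ℕ} {σ : Perm (Fin n)} (h : SplitsAt σ m) : SplitsAt σ.symm m := by
  have hbij : Set.BijOn σ {i | (i : ℕ) < m} {i | (i : ℕ) < m} :=
    (Set.toFinite _).injOn_iff_bijOn_of_mapsTo h |>.mp σ.injective.injOn
  intro j hj
  obtain ⟨i, hi, rfl⟩ := hbij.surjOn hj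
  simpa using hi

lemma splitsAt_permCongr_iff {n n' m : ℕ} (h : n = n') {σ : Perm (Fin n)} :
    SplitsAt ((finCongr h).permCongr σ) m ↔ SplitsAt σ m := by
  subst h; simp [SplitsAt]

lemma splitsAt_directSum {k l : ℕ} (σ : Perm (Fin k)) (τ : Perm (Fin l)) :
    SplitsAt (directSum σ τ) k := by
  intro i hi
  refine Fin.addCases (fun i _ => ?_) (fun i hi => ?_) i hi
  · simp
  · simp at hi

lemma SplitsAt.of_directSum {k l m : ℕ} {σ : Perm (Fin k)} {τ : Perm (Fin l)}
    (h : SplitsAt (directSum σ τ) m) : SplitsAt σ m := by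
  intro i hi
  simpa using h (Fin.castAdd l i) hi

lemma not_splitsAt_skewSum {k l m : ℕ} (σ : Perm (Fin k)) (τ : Perm (Fin l)) (hk : 0 < k)
    (hl : 0 < l) (hm₀ : 0 < m) (hm : m < k + l) : ¬ SplitsAt (skewSum σ τ) m := by
  -- The value `0` sits in the second block, forcing `k < m`; but then a position `< k` carries
  -- the value `k + l - 1 ≥ m`.
  intro h
  obtain ⟨j, hj⟩ := (skewSum σ τ).surjective ⟨0, by omega⟩
  have hjm : (j : ℕ) < m := by
    simpa [← hj] using h.symm ⟨0, by omega⟩ hm₀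
  have hkm : k < m := by
    induction j using Fin.addCases with
    | left i => have := congrArg Fin.val hj; simp at this; omega
    | right i => simp at hjm; omega
  have := h (Fin.castAdd l (σ.symm ⟨k - 1, by omega⟩)) (by simp; omega)
  simp at this
  omega

lemma isSumDecomposable_permCongr_iff {n n' : ℕ} (h : n = n') {σ : Perm (Fin n)} :
    IsSumDecomposable ((finCongr h).permCongr σ) ↔ IsSumDecomposable σ := by
  subst h; simp [IsSumDecomposable, SplitsAt]

lemma isSumDecomposable_directSum {k l : ℕ} (σ : Perm (Fin k)) (τ : Perm (Fin l)) (hk : 0 < k)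
    (hl : 0 < l) : IsSumDecomposable (directSum σ τ) :=
  ⟨k, hk, by omega, splitsAt_directSum σ τ⟩

lemma not_isSumDecomposable_skewSum {k l : ℕ} (σ : Perm (Fin k)) (τ : Perm (Fin l)) (hk : 0 < k)
    (hl : 0 < l) : ¬ IsSumDecomposable (skewSum σ τ) :=
  fun ⟨_, hm₀, hm, h⟩ => not_splitsAt_skewSum σ τ hk hl hm₀ hm h

lemma isLeast_splitsAt_directSum {k l : ℕ} {σ : Perm (Fin k)} (hk : 0 < k)
    (hσ : ¬ IsSumDecomposable σ) (τ : Perm (Fin l)) :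
    IsLeast {m | 0 < m ∧ SplitsAt (directSum σ τ) m} k :=
  ⟨⟨hk, splitsAt_directSum σ τ⟩,
    fun m ⟨hm₀, hm⟩ => not_lt.mp fun hmk => hσ ⟨m, hm₀, hmk, hm.of_directSum⟩⟩

lemma directSum_inj {k l : ℕ} {σ σ' : Perm (Fin k)} {τ τ' : Perm (Fin l)} :
    directSum σ τ = directSum σ' τ' ↔ σ = σ' ∧ τ = τ' := by
  refine ⟨fun h => ⟨?_, ?_⟩, fun ⟨rfl, rfl⟩ => rfl⟩
  · exact Equiv.ext fun i => by simpa using DFunLike.congr_fun h (Fin.castAdd l i)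
  · exact Equiv.ext fun i => by simpa using DFunLike.congr_fun h (Fin.natAdd k i)

lemma Separable.isSumDecomposable_permCompl_iff {n : ℕ} {σ : Perm (Fin n)} (h : Separable σ)
    (hn : 2 ≤ n) : IsSumDecomposable (permCompl σ) ↔ ¬ IsSumDecomposable σ := by
  cases h with
  | single => omega
  | dsum h₁ h₂ =>
    rw [permCompl_directSum]
    simp only [not_isSumDecomposable_skewSum _ _ h₁.pos h₂.pos,
      isSumDecomposable_directSum _ _ h₁.pos h₂.pos, not_true]
  | ssum h₁ h₂ =>
    rw [permCompl_skewSum]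
    simp only [not_isSumDecomposable_skewSum _ _ h₁.pos h₂.pos,
      isSumDecomposable_directSum _ _ h₁.pos h₂.pos, not_false_eq_true]

abbrev SepPerm (n : ℕ) : Type := {σ : Perm (Fin n) // Separable σ}

abbrev SepSumDecomposable (n : ℕ) : Type :=
  {σ : Perm (Fin n) // Separable σ ∧ IsSumDecomposable σ}

abbrev SepSumIndecomposable (n : ℕ) : Type :=
  {σ : Perm (Fin n) // Separable σ ∧ ¬ IsSumDecomposable σ}

lemma Separable.exists_directSum_eq {k l : ℕ} {σ : Perm (Fin k)} (hσ : Separable σ)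
    {τ : Perm (Fin l)} (hτ : Separable τ) :
    ∃ (a b : ℕ) (h : a + b = k + l) (α : SepSumIndecomposable a) (β : SepPerm b),
      (finCongr h).permCongr (directSum α.1 β.1) = directSum σ τ := by
  induction hσ generalizing l with
  | single =>
    exact ⟨1, l, rfl, ⟨_, .single, fun ⟨_, _, _, _⟩ => by omega⟩, ⟨τ, hτ⟩,
      by ext; simp⟩
  | @dsum k₁ k₂ σ₁ σ₂ h₁ h₂ ih₁ _ =>
    obtain ⟨a, b, h, α, β, hαβ⟩ := ih₁ (h₂.dsum hτ)
    refine ⟨a, b, h.trans (Nat.add_assoc k₁ k₂ l).symm, α, β,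
      (finCongr (Nat.add_assoc k₁ k₂ l)).permCongr.injective ?_⟩
    rw [directSum_assoc, ← hαβ]
    ext; simp [Equiv.permCongr_apply]
  | ssum h₁ h₂ =>
    exact ⟨_, l, rfl,
      ⟨_, h₁.ssum h₂, not_isSumDecomposable_skewSum _ _ h₁.pos h₂.pos⟩, ⟨τ, hτ⟩,
      by ext; simp⟩

def firstBlockDirectSum (n : ℕ) :
    (Σ p : antidiagonal n, SepSumIndecomposable p.1.1 × SepPerm p.1.2) → SepSumDecomposable n :=
  fun ⟨p, α, β⟩ =>
    ⟨(finCongr (mem_antidiagonal.mp p.2)).permCongr (directSum α.1 β.1),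
      (α.2.1.dsum β.2).permCongr _,
      (isSumDecomposable_permCongr_iff _).mpr
        (isSumDecomposable_directSum _ _ α.2.1.pos β.2.pos)⟩

/-- The size of the first block is recovered as the least split point. -/
lemma firstBlockDirectSum_injective (n : ℕ) : Function.Injective (firstBlockDirectSum n) := by
  rintro ⟨⟨⟨a, b⟩, hab⟩, α, β⟩ ⟨⟨⟨a', b'⟩, hab'⟩, α', β'⟩ he
  have he' := congrArg Subtype.val he
  simp only [firstBlockDirectSum] at he'
  have hsplit : ∀ m, SplitsAt (directSum α.1 β.1) m ↔ SplitsAt (directSum α'.1 β'.1) m :=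
    fun m => by rw [← splitsAt_permCongr_iff (mem_antidiagonal.mp hab), he',
      splitsAt_permCongr_iff]
  obtain rfl : a = a' := (isLeast_splitsAt_directSum α.2.1.pos α.2.2 β.1).unique
    (by simpa only [hsplit] using isLeast_splitsAt_directSum α'.2.1.pos α'.2.2 β'.1)
  obtain rfl : b = b' := by
    have := mem_antidiagonal.mp hab
    have := mem_antidiagonal.mp hab'
    omega
  obtain ⟨hα, hβ⟩ := directSum_inj.mp ((Equiv.permCongr _).injective he')
  obtain rfl := Subtype.ext hα
  obtain rfl := Subtype.ext hβ
  rfl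

lemma firstBlockDirectSum_surjective (n : ℕ) : Function.Surjective (firstBlockDirectSum n) := by
  rintro ⟨σ, hσ, hdec⟩
  cases hσ with
  | single => obtain ⟨_, _, _, _⟩ := hdec; omega
  | ssum h₁ h₂ => exact absurd hdec (not_isSumDecomposable_skewSum _ _ h₁.pos h₂.pos)
  | dsum h₁ h₂ =>
    obtain ⟨a, b, h, α, β, he⟩ := h₁.exists_directSum_eq h₂
    exact ⟨⟨⟨(a, b), mem_antidiagonal.mpr h⟩, α, β⟩, Subtype.ext he⟩

lemma card_sepSumDecomposable (n : ℕ) :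
    Nat.card (SepSumDecomposable n) =
      ∑ p ∈ antidiagonal n, Nat.card (SepSumIndecomposable p.1) * numSep p.2 := by
  rw [← Nat.card_congr (Equiv.ofBijective _ ⟨firstBlockDirectSum_injective n,
    firstBlockDirectSum_surjective n⟩), Nat.card_sigma]
  simp only [Nat.card_prod]
  exact sum_coe_sort (antidiagonal n) fun p => Nat.card (SepSumIndecomposable p.1) * numSep p.2

lemma card_sepSumDecomposable_eq_card_sepSumIndecomposable {n : ℕ} (hn : 2 ≤ n) :
    Nat.card (SepSumDecomposable n) = Nat.card (SepSumIndecomposable n) :=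
  Nat.card_congr
    { toFun σ := ⟨permCompl σ.1, σ.2.1.compl,
        fun h => (σ.2.1.isSumDecomposable_permCompl_iff hn).mp h σ.2.2⟩
      invFun σ := ⟨permCompl σ.1, σ.2.1.compl,
        (σ.2.1.isSumDecomposable_permCompl_iff hn).mpr σ.2.2⟩
      left_inv σ := Subtype.ext (permCompl_permCompl σ.1)
      right_inv σ := Subtype.ext (permCompl_permCompl σ.1) }

lemma numSep_eq_card_add_card (n : ℕ) :
    numSep n = Nat.card (SepSumDecomposable n) + Nat.card (SepSumIndecomposable n) := by
  classical
  rw [numSep, ← Nat.card_sum]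
  exact Nat.card_congr <|
    (Equiv.sumCompl fun σ : SepPerm n => IsSumDecomposable σ.1).symm.trans <|
      (Equiv.subtypeSubtypeEquivSubtypeInter _ _).sumCongr
        (Equiv.subtypeSubtypeEquivSubtypeInter _ (fun σ => ¬ IsSumDecomposable σ))

lemma sum_antidiagonal_eq_sum_Icc {M : Type*} [AddCommMonoid M] (f : ℕ → ℕ → M)
    (hf₀ : ∀ j, f 0 j = 0) (hf₀' : ∀ i, f i 0 = 0) (n : ℕ) :
    ∑ p ∈ antidiagonal n, f p.1 p.2 = ∑ i ∈ Icc 1 (n - 1), f i (n - i) := by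
  rw [Nat.sum_antidiagonal_eq_sum_range_succ f n]
  refine (Finset.sum_subset (fun i hi => ?_) fun i hi hi' => ?_).symm
  · simp only [mem_Icc, mem_range] at hi ⊢; omega
  · simp only [mem_Icc, mem_range, not_and_or, not_le] at hi hi'
    rcases hi' with h | h
    · rw [show i = 0 by omega, hf₀]
    · rw [show n - i = 0 by omega, hf₀']

lemma numSep_zero : numSep 0 = 0 :=
  @Nat.card_of_isEmpty _ ⟨fun σ => σ.2.pos.false⟩

lemma card_sepSumIndecomposable_zero : Nat.card (SepSumIndecomposable 0) = 0 :=
  @Nat.card_of_isEmpty _ ⟨fun σ => σ.2.1.pos.false⟩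

lemma numSep_one : numSep 1 = 1 :=
  Nat.card_eq_one_iff_unique.mpr ⟨inferInstance, ⟨⟨_, .single⟩⟩⟩

lemma card_sepSumIndecomposable_one : Nat.card (SepSumIndecomposable 1) = 1 :=
  Nat.card_eq_one_iff_unique.mpr
    ⟨inferInstance, ⟨⟨_, .single, fun ⟨_, _, _, _⟩ => by omega⟩⟩⟩

lemma numSep_eq_two_mul_card_sepSumIndecomposable {n : ℕ} (hn : 2 ≤ n) :
    numSep n = 2 * Nat.card (SepSumIndecomposable n) := by
  rw [numSep_eq_card_add_card, card_sepSumDecomposable_eq_card_sepSumIndecomposable hn, two_mul]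

lemma numSep_eq_two_mul_sum {n : ℕ} (hn : 2 ≤ n) :
    numSep n = 2 * ∑ j ∈ Icc 1 (n - 1), Nat.card (SepSumIndecomposable j) * numSep (n - j) := by
  rw [numSep_eq_card_add_card, ← card_sepSumDecomposable_eq_card_sepSumIndecomposable hn,
    ← two_mul, card_sepSumDecomposable,
    sum_antidiagonal_eq_sum_Icc (fun i j => Nat.card (SepSumIndecomposable i) * numSep j)]
  all_goals simp [numSep_zero, card_sepSumIndecomposable_zero]

/-- The recurrence `s_n = s_1 s_{n-1} + (1/2)∑_{j=2}^{n-1} s_j s_{n-j} + (1/2)s_n` for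
`n ≥ 2`, with `s_1 = 1`. -/
theorem numSep_recurrence_half :
    numSep 1 = 1 ∧
    ∀ n : ℕ, 2 ≤ n →
      (numSep n : ℚ) = (numSep 1 : ℚ) * numSep (n - 1) +
        (1 / 2) * ∑ j ∈ Finset.Icc 2 (n - 1), (numSep j : ℚ) * numSep (n - j) +
        (1 / 2) * numSep n := by
  refine ⟨numSep_one, fun n hn => ?_⟩
  have hrec := numSep_eq_two_mul_sum hn
  rw [← insert_Icc_add_one_left_eq_Icc (by omega : 1 ≤ n - 1), sum_insert (by simp),
    card_sepSumIndecomposable_one, one_mul] at hrec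
  have hsum : ∑ j ∈ Icc 2 (n - 1), (numSep j : ℚ) * numSep (n - j) =
      2 * ∑ j ∈ Icc 2 (n - 1), (Nat.card (SepSumIndecomposable j) : ℚ) * numSep (n - j) := by
    rw [mul_sum]
    refine sum_congr rfl fun j hj => ?_
    rw [numSep_eq_two_mul_card_sepSumIndecomposable (mem_Icc.mp hj).1]
    push_cast
    ring
  rw [numSep_one, hsum, hrec]
  push_cast
  ring
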